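/- arXiv:1704.07083 — 6 statements merged into one kernel-verified Lean document; each statement's English description precedes it below -/
import Mathlib

section
/- Let q be a prime power and enumerate F_q = {α_0,...,α_{q-1}}. Define the generalized Newton polynomial N_i(X) = ∏_{j=0}^{i-1} (X - α_{j mod q}) for i in N, and N_{\vec{i}}(X_1,...,X_n) = N_{i_1}(X_1)···N_{i_n}(X_n). Then for every \vec{i} in N^n and every (\vec{j},\vec{t}) in [q]^n × N^n: if \vec{j} + q\vec{t} is not coordinatewise ≥ \vec{i}, then H(N_{\vec{i}}, \vec{t})(α_{\vec{j}}) = 0; and if \vec{j} + q\vec{t} = \vec{i}, then H(N_{\vec{i}}, \vec{t})(α_{\vec{j}}) ≠ 0. -/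
open MvPolynomial

noncomputable def mvHasseDeriv {σ R : Type*} [CommSemiring R] (s : σ →₀ ℕ)
    (F : MvPolynomial σ R) : MvPolynomial σ R :=
  MvPolynomial.coeff s
    (MvPolynomial.eval₂ (MvPolynomial.C.comp MvPolynomial.C)
      (fun i => MvPolynomial.C (MvPolynomial.X i) + MvPolynomial.X i) F)

noncomputable def Nuni {F : Type*} [Field F] (α : ℕ → F) (q i : ℕ) : Polynomial F :=
  ∏ j ∈ Finset.range i, (Polynomial.X - Polynomial.C (α (j % q)))

noncomputable def Nvec {F : Type*} [Field F] (α : ℕ → F) (q : ℕ) {n : ℕ}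
    (i : Fin n → ℕ) : MvPolynomial (Fin n) F :=
  ∏ ℓ, ∏ j ∈ Finset.range (i ℓ), (MvPolynomial.X ℓ - MvPolynomial.C (α (j % q)))

noncomputable def Eev {F : Type*} [Field F] (α : ℕ → F) (q : ℕ) {n : ℕ}
    (P : MvPolynomial (Fin n) F) (j : Fin n → ℕ) : F :=
  MvPolynomial.eval (fun ℓ => α (j ℓ % q))
    (mvHasseDeriv (Finsupp.equivFunOnFinite.symm fun ℓ => j ℓ / q) P)

noncomputable def Euni {F : Type*} [Field F] (α : ℕ → F) (q : ℕ)
    (P : Polynomial F) (j : ℕ) : F :=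
  (Polynomial.hasseDeriv (j / q) P).eval (α (j % q))

def Cset (q s m : ℕ) : Finset (Fin m → ℕ) :=
  (Fintype.piFinset fun _ => Finset.range (s * q)).filter fun v => (∑ ℓ, v ℓ / q) < s

def Rset (q : ℕ) (d : ℤ) (s m : ℕ) : Finset (Fin m → ℕ) :=
  (Cset q s m).filter fun v => d < ∑ ℓ, (v ℓ : ℤ)

def Δfun (q : ℕ) (d' s' : ℤ) : ℤ := (s' - max ((d' + 1).fdiv (q : ℤ)) 0) * (q : ℤ)

def supportedOn (F : Type*) [Field F] {n : ℕ} (I : Set (Fin n → ℕ)) :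
    Submodule F (MvPolynomial (Fin n) F) where
  carrier := {P | ∀ m ∈ P.support, ⇑m ∈ I}
  zero_mem' := by simp
  add_mem' := by
    intro a b ha hb m hm
    rcases Finset.mem_union.mp (MvPolynomial.support_add hm) with h | h
    · exact ha m h
    · exact hb m h
  smul_mem' := by
    intro c a ha m hm
    exact ha m (MvPolynomial.support_smul hm)



section helpers
variable {F : Type*} [Field F]

lemma prod_monomial' {ι : Type*} (s : Finset ι) {n : ℕ} (d : ι → (Fin n →₀ ℕ)) (c : ι → F) :
    ∏ ℓ ∈ s, MvPolynomial.monomial (d ℓ) (c ℓ)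
      = MvPolynomial.monomial (∑ ℓ ∈ s, d ℓ) (∏ ℓ ∈ s, c ℓ) := by
  induction s using Finset.cons_induction with
  | empty => simp [MvPolynomial.monomial_zero']
  | cons a s ha ih => simp [ih, MvPolynomial.monomial_mul]

lemma sum_single_eq_symm {n : ℕ} (p : Fin n → ℕ) :
    (∑ ℓ, Finsupp.single ℓ (p ℓ)) = Finsupp.equivFunOnFinite.symm p := by
  ext x
  simp [Finsupp.finset_sum_apply, Finsupp.single_apply]

lemma coeff_prod_aeval {n : ℕ} (G : Fin n → Polynomial F) (t : Fin n → ℕ) :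
    MvPolynomial.coeff (Finsupp.equivFunOnFinite.symm t)
      (∏ ℓ, Polynomial.aeval (MvPolynomial.X ℓ : MvPolynomial (Fin n) F) (G ℓ))
      = ∏ ℓ, (G ℓ).coeff (t ℓ) := by
  have h1 : ∀ ℓ, Polynomial.aeval (MvPolynomial.X ℓ : MvPolynomial (Fin n) F) (G ℓ)
      = ∑ k ∈ (G ℓ).support, MvPolynomial.monomial (Finsupp.single ℓ k) ((G ℓ).coeff k) := by
    intro ℓ
    rw [Polynomial.aeval_def, Polynomial.eval₂_eq_sum, Polynomial.sum_def]
    refine Finset.sum_congr rfl fun k _ => ?_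
    rw [MvPolynomial.algebraMap_eq, MvPolynomial.X_pow_eq_monomial,
      MvPolynomial.C_mul_monomial, mul_one]
  simp_rw [h1]
  rw [Finset.prod_univ_sum]
  simp_rw [prod_monomial', sum_single_eq_symm]
  rw [MvPolynomial.coeff_sum]
  simp_rw [MvPolynomial.coeff_monomial, Finsupp.equivFunOnFinite.symm.injective.eq_iff]
  rw [Finset.sum_ite_eq' (Fintype.piFinset fun ℓ => (G ℓ).support) t
    (fun p => ∏ ℓ, (G ℓ).coeff (p ℓ))]
  split_ifs with h
  · rfl
  · rw [Fintype.mem_piFinset] at h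
    push_neg at h
    obtain ⟨ℓ, hℓ⟩ := h
    rw [Polynomial.notMem_support_iff] at hℓ
    exact (Finset.prod_eq_zero (Finset.mem_univ ℓ) hℓ).symm

lemma eval_mvHasseDeriv {n : ℕ} (a : Fin n → F) (s : Fin n →₀ ℕ) (P : MvPolynomial (Fin n) F) :
    MvPolynomial.eval a (mvHasseDeriv s P)
      = MvPolynomial.coeff s (MvPolynomial.eval₂ MvPolynomial.C
          (fun ℓ => MvPolynomial.C (a ℓ) + MvPolynomial.X ℓ) P) := by
  rw [mvHasseDeriv, ← MvPolynomial.coeff_map]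
  congr 1
  have : (MvPolynomial.map (MvPolynomial.eval a)).comp
      (MvPolynomial.eval₂Hom (MvPolynomial.C.comp MvPolynomial.C)
        (fun i => MvPolynomial.C (MvPolynomial.X i) + MvPolynomial.X i))
      = MvPolynomial.eval₂Hom MvPolynomial.C
        (fun ℓ => MvPolynomial.C (a ℓ) + MvPolynomial.X ℓ) := by
    apply MvPolynomial.ringHom_ext <;> intro x <;> simp
  exact RingHom.congr_fun this P

end helpers




section key
variable {F : Type*} [Field F]

lemma taylor_eq_aeval (r : F) (p : Polynomial F) :
    Polynomial.taylor r p = Polynomial.aeval (Polynomial.X + Polynomial.C r) p := by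
  rw [Polynomial.taylor_apply, Polynomial.comp, Polynomial.aeval_def, Polynomial.algebraMap_eq]

lemma eval₂_Nvec {n : ℕ} (α : ℕ → F) (q : ℕ) (i : Fin n → ℕ) (a : Fin n → F) :
    MvPolynomial.eval₂ MvPolynomial.C
        (fun ℓ => MvPolynomial.C (a ℓ) + MvPolynomial.X ℓ) (Nvec α q i)
      = ∏ ℓ, Polynomial.aeval (MvPolynomial.X ℓ : MvPolynomial (Fin n) F)
          (Polynomial.taylor (a ℓ) (Nuni α q (i ℓ))) := by
  have : MvPolynomial.eval₂ MvPolynomial.C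
        (fun ℓ => MvPolynomial.C (a ℓ) + MvPolynomial.X ℓ) (Nvec α q i)
      = MvPolynomial.eval₂Hom MvPolynomial.C
        (fun ℓ => MvPolynomial.C (a ℓ) + MvPolynomial.X ℓ) (Nvec α q i) := rfl
  rw [this, Nvec]
  rw [map_prod]
  refine Finset.prod_congr rfl fun ℓ _ => ?_
  rw [map_prod, taylor_eq_aeval, Nuni, map_prod, map_prod]
  refine Finset.prod_congr rfl fun k _ => ?_
  simp [MvPolynomial.algebraMap_eq]
  ring

end key



section uni
variable {F : Type*} [Field F]

lemma taylor_eq_aeval' (r : F) (p : Polynomial F) :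
    Polynomial.taylor r p = Polynomial.aeval (Polynomial.X + Polynomial.C r) p := by
  rw [Polynomial.taylor_apply, Polynomial.comp, Polynomial.aeval_def, Polynomial.algebraMap_eq]

lemma taylor_Nuni (α : ℕ → F) (q i j : ℕ) :
    Polynomial.taylor (α j) (Nuni α q i)
      = Polynomial.X ^ ((Finset.range i).filter fun k => k % q = j).card
        * ∏ k ∈ (Finset.range i).filter (fun k => ¬ k % q = j),
            (Polynomial.X + Polynomial.C (α j - α (k % q))) := by
  rw [taylor_eq_aeval', Nuni, map_prod]
  have h : ∀ k ∈ Finset.range i,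
      (Polynomial.aeval (Polynomial.X + Polynomial.C (α j)) (Polynomial.X - Polynomial.C (α (k % q))) : Polynomial F)
        = Polynomial.X + Polynomial.C (α j - α (k % q)) := by
    intro k _
    simp [Polynomial.algebraMap_eq]
    ring
  rw [Finset.prod_congr rfl h, ← Finset.prod_filter_mul_prod_filter_not (Finset.range i)
    (fun k => k % q = j)]
  congr 1
  rw [Finset.prod_congr rfl (fun k hk => ?_), Finset.prod_const]
  rw [Finset.mem_filter] at hk
  rw [hk.2, sub_self, map_zero, add_zero]

lemma card_filter_ge (q i j t : ℕ) (hq0 : 0 < q) (hj : j < q) (hlt : j + q * t < i) :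
    t < ((Finset.range i).filter fun k => k % q = j).card := by
  have : (Finset.range (t + 1)).card
      ≤ ((Finset.range i).filter fun k => k % q = j).card := by
    apply Finset.card_le_card_of_injOn (fun s => j + q * s)
    · intro s hs
      rw [Finset.mem_coe, Finset.mem_range] at hs
      rw [Finset.mem_coe, Finset.mem_filter, Finset.mem_range]; beta_reduce
      constructor
      · have : q * s ≤ q * t := Nat.mul_le_mul_left q (Nat.lt_succ_iff.mp hs)
        omega
      · rw [Nat.add_mul_mod_self_left, Nat.mod_eq_of_lt hj]
    · intro s1 _ s2 _ h
      have h' : j + q * s1 = j + q * s2 := h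
      have : q * s1 = q * s2 := by omega
      exact Nat.eq_of_mul_eq_mul_left hq0 this
  simpa using this

lemma card_filter_eq (q i j t : ℕ) (hq0 : 0 < q) (hj : j < q) (heq : j + q * t = i) :
    ((Finset.range i).filter fun k => k % q = j).card = t := by
  have himg : ((Finset.range i).filter fun k => k % q = j)
      = (Finset.range t).image (fun s => j + q * s) := by
    ext k
    rw [Finset.mem_filter, Finset.mem_range, Finset.mem_image]
    constructor
    · rintro ⟨hki, hkm⟩
      refine ⟨k / q, ?_, ?_⟩
      · rw [Finset.mem_range]
        have h1 : q * (k / q) + k % q = k := Nat.div_add_mod k q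
        have h2 : q * (k / q) < q * t := by omega
        exact Nat.lt_of_mul_lt_mul_left h2
      · have h1 : q * (k / q) + k % q = k := Nat.div_add_mod k q
        omega
    · rintro ⟨s, hs, rfl⟩
      rw [Finset.mem_range] at hs
      have : q * s < q * t := Nat.mul_lt_mul_left hq0 |>.mpr hs
      refine ⟨by omega, by rw [Nat.add_mul_mod_self_left, Nat.mod_eq_of_lt hj]⟩
  rw [himg, Finset.card_image_of_injOn, Finset.card_range]
  intro s1 _ s2 _ h
  have h' : j + q * s1 = j + q * s2 := h
  have : q * s1 = q * s2 := by omega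
  exact Nat.eq_of_mul_eq_mul_left hq0 this

lemma uni_zero (α : ℕ → F) (q : ℕ) (hq0 : 0 < q) (i j t : ℕ) (hj : j < q)
    (hlt : j + q * t < i) :
    (Polynomial.hasseDeriv t (Nuni α q i)).eval (α j) = 0 := by
  rw [← Polynomial.taylor_coeff, taylor_Nuni]
  rw [Polynomial.coeff_X_pow_mul']
  rw [if_neg (by have := card_filter_ge q i j t hq0 hj hlt; omega)]

lemma uni_ne (α : ℕ → F) (q : ℕ) (hq0 : 0 < q)
    (hinj : ∀ a < q, ∀ b < q, α a = α b → a = b) (i j t : ℕ) (hj : j < q)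
    (heq : j + q * t = i) :
    (Polynomial.hasseDeriv t (Nuni α q i)).eval (α j) ≠ 0 := by
  rw [← Polynomial.taylor_coeff, taylor_Nuni, card_filter_eq q i j t hq0 hj heq]
  rw [Polynomial.coeff_X_pow_mul']
  rw [if_pos le_rfl, Nat.sub_self, Polynomial.coeff_zero_eq_eval_zero, Polynomial.eval_prod]
  rw [Finset.prod_ne_zero_iff]
  intro k hk
  rw [Finset.mem_filter] at hk
  simp only [Polynomial.eval_add, Polynomial.eval_X, Polynomial.eval_C, zero_add]
  intro hcontra
  have : α j = α (k % q) := by linear_combination hcontra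
  exact hk.2 (hinj (k % q) (Nat.mod_lt k hq0) j hj this.symm)

end uni

theorem stmt2 {F : Type*} [Field F] [Fintype F] (q : ℕ) (hq : Fintype.card F = q)
    (α : ℕ → F) (hinj : ∀ a < q, ∀ b < q, α a = α b → a = b)
    {n : ℕ} (i j t : Fin n → ℕ) (hj : ∀ ℓ, j ℓ < q) :
    ((¬ ∀ ℓ, i ℓ ≤ j ℓ + q * t ℓ) →
      MvPolynomial.eval (fun ℓ => α (j ℓ))
        (mvHasseDeriv (Finsupp.equivFunOnFinite.symm t) (Nvec α q i)) = 0)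
    ∧ ((∀ ℓ, j ℓ + q * t ℓ = i ℓ) →
      MvPolynomial.eval (fun ℓ => α (j ℓ))
        (mvHasseDeriv (Finsupp.equivFunOnFinite.symm t) (Nvec α q i)) ≠ 0) := by

  have hq0 : 0 < q := hq ▸ Fintype.card_pos
  have key : MvPolynomial.eval (fun ℓ => α (j ℓ))
      (mvHasseDeriv (Finsupp.equivFunOnFinite.symm t) (Nvec α q i))
      = ∏ ℓ, (Polynomial.hasseDeriv (t ℓ) (Nuni α q (i ℓ))).eval (α (j ℓ)) := by
    rw [eval_mvHasseDeriv, eval₂_Nvec, coeff_prod_aeval]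
    simp [Polynomial.taylor_coeff]
  rw [key]
  constructor
  · intro h
    push_neg at h
    obtain ⟨ℓ, hℓ⟩ := h
    exact Finset.prod_eq_zero (Finset.mem_univ ℓ)
      (uni_zero α q hq0 (i ℓ) (j ℓ) (t ℓ) (hj ℓ) (by omega))
  · intro h
    rw [Finset.prod_ne_zero_iff]
    intro ℓ _
    exact uni_ne α q hq0 hinj (i ℓ) (j ℓ) (t ℓ) (hj ℓ) (h ℓ)
end

section
/- For i in [q] and s in N, H(N_{i+sq}, s)(α_i) = ∏_{k in [q]\{i}} (α_i - α_k)^{s + ε(k)}, where ε(k) = 1 if k < i and 0 otherwise; in particular this value is nonzero. -/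
open MvPolynomial

lemma cyc_prod {M : Type*} [CommMonoid M] (f : ℕ → M) (q i : ℕ) (hi : i ≤ q) :
    ∏ j ∈ Finset.range q, f ((i + j) % q) = ∏ j ∈ Finset.range q, f j := by
  have h1 : q = (q - i) + i := by omega
  have h2 : q = i + (q - i) := by omega
  calc ∏ j ∈ Finset.range q, f ((i + j) % q)
      = ∏ j ∈ Finset.range ((q-i)+i), f ((i + j) % q) := by rw [← h1]
    _ = (∏ j ∈ Finset.range (q-i), f ((i+j)%q)) *
        ∏ j ∈ Finset.range i, f ((i+((q-i)+j))%q) := by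
        rw [Finset.prod_range_add]
    _ = (∏ j ∈ Finset.range (q-i), f (i+j)) * ∏ j ∈ Finset.range i, f j := by
        congr 1
        · exact Finset.prod_congr rfl fun j hj => by
            rw [Nat.mod_eq_of_lt]; have := Finset.mem_range.mp hj; omega
        · refine Finset.prod_congr rfl fun j hj => ?_
          have hj' := Finset.mem_range.mp hj
          have h3 : i + ((q-i)+j) = q + j := by omega
          rw [h3, Nat.add_mod_left, Nat.mod_eq_of_lt]; omega
    _ = ∏ j ∈ Finset.range q, f j := by
        conv_rhs => rw [h2, Finset.prod_range_add]
        exact mul_comm _ _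

lemma Nuni_split {F : Type*} [Field F] (α : ℕ → F) (q i s : ℕ) (hi : i < q) :
    Nuni α q (i + s * q) =
      Nuni α q i * (∏ k ∈ Finset.range q, (Polynomial.X - Polynomial.C (α k)))^s := by
  induction s with
  | zero => simp
  | succ s ih =>
      have h : i + (s+1)*q = (i + s*q) + q := by ring
      rw [h, Nuni, Finset.prod_range_add, ← Nuni, ih]
      have h2 : ∏ j ∈ Finset.range q, (Polynomial.X - Polynomial.C (α ((i + s*q + j) % q)))
          = ∏ k ∈ Finset.range q, (Polynomial.X - Polynomial.C (α k)) := by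
        have hc := cyc_prod (fun k => (Polynomial.X : Polynomial F) - Polynomial.C (α k)) q i hi.le
        calc ∏ j ∈ Finset.range q, ((Polynomial.X:Polynomial F) - Polynomial.C (α ((i + s*q + j) % q)))
            = ∏ j ∈ Finset.range q, ((Polynomial.X:Polynomial F) - Polynomial.C (α ((i + j) % q))) := by
              refine Finset.prod_congr rfl fun j hj => ?_
              rw [show i + s*q + j = i + j + s*q by ring, Nat.add_mul_mod_self_right]
          _ = _ := hc
      rw [h2, pow_succ, mul_assoc]

lemma hasse_eval_of_factor {F : Type*} [Field F] (a : F) (s : ℕ) (Q : Polynomial F) :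
    (Polynomial.hasseDeriv s ((Polynomial.X - Polynomial.C a)^s * Q)).eval a = Q.eval a := by
  rw [← Polynomial.taylor_coeff, Polynomial.taylor_apply, Polynomial.mul_comp,
    Polynomial.pow_comp, Polynomial.sub_comp, Polynomial.X_comp, Polynomial.C_comp]
  have h : (Polynomial.X : Polynomial F) + Polynomial.C a - Polynomial.C a = Polynomial.X := by
    ring
  have h2 := Polynomial.coeff_X_pow_mul (Q.comp (Polynomial.X + Polynomial.C a)) s 0
  rw [zero_add] at h2
  rw [h, h2, Polynomial.coeff_zero_eq_eval_zero, Polynomial.eval_comp]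
  simp

theorem stmt3 {F : Type*} [Field F] [Fintype F] (q : ℕ) (hq : Fintype.card F = q)
    (α : ℕ → F) (hinj : ∀ a < q, ∀ b < q, α a = α b → a = b)
    (i s : ℕ) (hi : i < q) :
    (Polynomial.hasseDeriv s (Nuni α q (i + s * q))).eval (α i)
        = ∏ k ∈ (Finset.range q).erase i, (α i - α k) ^ (s + if k < i then 1 else 0)
    ∧ (Polynomial.hasseDeriv s (Nuni α q (i + s * q))).eval (α i) ≠ 0 := by
  classical
  set Q : Polynomial F := (∏ j ∈ Finset.range i, (Polynomial.X - Polynomial.C (α j))) *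
      (∏ k ∈ (Finset.range q).erase i, (Polynomial.X - Polynomial.C (α k)))^s with hQ
  have hmem : i ∈ Finset.range q := Finset.mem_range.mpr hi
  have hNi : Nuni α q i = ∏ j ∈ Finset.range i, (Polynomial.X - Polynomial.C (α j)) := by
    refine Finset.prod_congr rfl fun j hj => ?_
    have := Finset.mem_range.mp hj
    rw [Nat.mod_eq_of_lt (by omega)]
  have hsplit : Nuni α q (i + s * q) = (Polynomial.X - Polynomial.C (α i))^s * Q := by
    rw [Nuni_split α q i s hi, ← Finset.mul_prod_erase _ _ hmem, mul_pow, hNi, hQ]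
    ring
  have heval : (Polynomial.hasseDeriv s (Nuni α q (i + s * q))).eval (α i)
      = Q.eval (α i) := by rw [hsplit, hasse_eval_of_factor]
  have hQval : Q.eval (α i)
      = ∏ k ∈ (Finset.range q).erase i, (α i - α k) ^ (s + if k < i then 1 else 0) := by
    have hfilter : ((Finset.range q).erase i).filter (· < i) = Finset.range i := by
      ext k
      simp only [Finset.mem_filter, Finset.mem_erase, Finset.mem_range]
      omega
    rw [hQ]
    simp only [Polynomial.eval_mul, Polynomial.eval_pow, Polynomial.eval_prod, Polynomial.eval_sub, Polynomial.eval_X, Polynomial.eval_C]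
    rw [Finset.prod_congr rfl (fun k _ => pow_add (α i - α k) s _),
      Finset.prod_mul_distrib]
    have : ∏ k ∈ (Finset.range q).erase i, (α i - α k) ^ (if k < i then 1 else 0)
        = ∏ j ∈ Finset.range i, (α i - α j) := by
      rw [← hfilter, Finset.prod_filter]
      refine Finset.prod_congr rfl fun k _ => ?_
      by_cases h : k < i <;> simp [h]
    rw [this, ← Finset.prod_pow]; ring
  refine ⟨heval.trans hQval, ?_⟩
  rw [heval, hQval]
  refine Finset.prod_ne_zero_iff.mpr fun k hk => ?_
  have hk' := Finset.mem_erase.mp hk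
  have hkq := Finset.mem_range.mp hk'.2
  refine pow_ne_zero _ (sub_ne_zero.mpr fun h => hk'.1 ?_)
  exact (hinj i hi k hkq h).symm
end

section
/- The dimension of the multiplicity code Mult^s_d over F_q equals binom(n+d, n), i.e., the evaluation map eval^s_d from polynomials in n variables of total degree at most d (with d < sq) to ((F_q)^{σ_{s,n}})^{q^n} is injective. -/
open MvPolynomial

namespace MultAux

variable {F : Type*} [Field F]

lemma nuni_monic (α : ℕ → F) (q a : ℕ) : (Nuni α q a).Monic :=
  Polynomial.monic_prod_of_monic _ _ fun _ _ => Polynomial.monic_X_sub_C _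

lemma nuni_natDegree (α : ℕ → F) (q a : ℕ) : (Nuni α q a).natDegree = a := by
  rw [Nuni, Polynomial.natDegree_prod]
  · simp
  · intro i _
    exact Polynomial.X_sub_C_ne_zero _

lemma nuni_coeff_self (α : ℕ → F) (q a : ℕ) : (Nuni α q a).coeff a = 1 := by
  have h := (nuni_monic α q a).coeff_natDegree
  rwa [nuni_natDegree] at h

lemma nuni_coeff_eq_zero (α : ℕ → F) (q : ℕ) {a k : ℕ} (h : a < k) :
    (Nuni α q a).coeff k = 0 :=
  Polynomial.coeff_eq_zero_of_natDegree_lt (by rwa [nuni_natDegree])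

lemma euni_eq_taylor (α : ℕ → F) (q : ℕ) (p : Polynomial F) (j : ℕ) :
    Euni α q p j = (Polynomial.taylor (α (j % q)) p).coeff (j / q) :=
  (Polynomial.taylor_coeff (r := α (j % q)) (f := p) (j / q)).symm

lemma euni_nuni_zero (α : ℕ → F) {q : ℕ} (hq : 0 < q) {a b : ℕ} (hb : b < a) :
    Euni α q (Nuni α q a) b = 0 := by
  rw [euni_eq_taylor]
  set k := b / q with hk
  set c := α (b % q) with hc
  have hdvd : (Polynomial.X - Polynomial.C c) ^ (k + 1) ∣ Nuni α q a := by
    have hsub : (Finset.range (k + 1)).image (fun t => b % q + t * q) ⊆ Finset.range a := by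
      intro j hj
      simp only [Finset.mem_image, Finset.mem_range] at hj ⊢
      obtain ⟨t, ht, rfl⟩ := hj
      have ht' : t ≤ k := Nat.lt_succ_iff.mp ht
      calc b % q + t * q ≤ b % q + k * q := by gcongr
        _ = b := by rw [hk]; exact Nat.mod_add_div' b q
        _ < a := hb
    have h1 := Finset.prod_dvd_prod_of_subset _ _
      (fun j => Polynomial.X - Polynomial.C (α (j % q))) hsub
    rw [Finset.prod_image] at h1
    · have h2 : ∀ t ∈ Finset.range (k + 1),
          (Polynomial.X - Polynomial.C (α ((b % q + t * q) % q)))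
            = Polynomial.X - Polynomial.C c := by
        intro t _
        rw [Nat.add_mul_mod_self_right, Nat.mod_mod_of_dvd _ dvd_rfl]
      rw [Finset.prod_congr rfl h2, Finset.prod_const, Finset.card_range] at h1
      exact h1
    · intro t1 _ t2 _ hEq
      have := Nat.add_left_cancel hEq
      exact Nat.eq_of_mul_eq_mul_right hq this
  obtain ⟨G, hG⟩ := hdvd
  rw [hG, Polynomial.taylor_mul]
  have h1 : Polynomial.taylor c ((Polynomial.X - Polynomial.C c) ^ (k + 1))
      = Polynomial.X ^ (k + 1) := by
    simp [Polynomial.taylor_apply, Polynomial.pow_comp, Polynomial.sub_comp]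
  rw [h1, Polynomial.coeff_X_pow_mul']
  simp

lemma euni_nuni_diag (α : ℕ → F) {q : ℕ} (hq : 0 < q)
    (hinj : ∀ a < q, ∀ b < q, α a = α b → a = b) (a : ℕ) :
    Euni α q (Nuni α q a) a ≠ 0 := by
  classical
  rw [euni_eq_taylor]
  set r := a % q with hr
  set k := a / q with hk
  set c := α r with hc
  have hrq : r < q := Nat.mod_lt _ hq
  set G := ∏ j ∈ (Finset.range a).filter (fun j => ¬ j % q = r),
      (Polynomial.X - Polynomial.C (α (j % q))) with hGdef
  have hsplit : Nuni α q a = (Polynomial.X - Polynomial.C c) ^ k * G := by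
    rw [Nuni, ← Finset.prod_filter_mul_prod_filter_not (Finset.range a) (fun j => j % q = r)]
    congr 1
    have himg : (Finset.range a).filter (fun j => j % q = r)
        = (Finset.range k).image (fun t => r + t * q) := by
      ext j
      simp only [Finset.mem_filter, Finset.mem_range, Finset.mem_image]
      constructor
      · rintro ⟨hja, hjr⟩
        have e1 : r + j / q * q = j := by rw [← hjr]; exact Nat.mod_add_div' j q
        have e2 : r + k * q = a := by rw [hr, hk]; exact Nat.mod_add_div' a q
        have h3 : j / q * q < k * q := by omega
        exact ⟨j / q, Nat.lt_of_mul_lt_mul_right h3, e1⟩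
      · rintro ⟨t, ht, rfl⟩
        constructor
        · calc r + t * q < r + k * q := by
                have : t + 1 ≤ k := ht
                have h2 : (t + 1) * q ≤ k * q := by gcongr
                have h3 : t * q < (t + 1) * q := by
                  simpa [Nat.add_mul] using hq
                omega
            _ = a := by rw [hr, hk]; exact Nat.mod_add_div' a q
        · rw [Nat.add_mul_mod_self_right, Nat.mod_eq_of_lt hrq]
    rw [himg, Finset.prod_image]
    · rw [Finset.prod_congr rfl (fun t _ => ?_), Finset.prod_const, Finset.card_range]
      rw [Nat.add_mul_mod_self_right, Nat.mod_eq_of_lt hrq]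
    · intro t1 _ t2 _ hEq
      exact Nat.eq_of_mul_eq_mul_right hq (Nat.add_left_cancel hEq)
  rw [hsplit, Polynomial.taylor_mul]
  have h1 : Polynomial.taylor c ((Polynomial.X - Polynomial.C c) ^ k)
      = Polynomial.X ^ k := by
    simp [Polynomial.taylor_apply, Polynomial.pow_comp, Polynomial.sub_comp]
  rw [h1]
  have h2 : (Polynomial.X ^ k * Polynomial.taylor c G).coeff k
      = (Polynomial.taylor c G).coeff 0 := by
    simpa using Polynomial.coeff_X_pow_mul (Polynomial.taylor c G) k 0
  rw [h2, Polynomial.taylor_coeff_zero, hGdef, Polynomial.eval_prod]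
  rw [Finset.prod_ne_zero_iff]
  intro j hj
  simp only [Finset.mem_filter, Finset.mem_range] at hj
  simp only [Polynomial.eval_sub, Polynomial.eval_X, Polynomial.eval_C, sub_ne_zero, hc]
  intro hEq
  exact hj.2 (hinj _ (Nat.mod_lt _ hq) _ hrq hEq.symm)

lemma nvec_eq_prod (α : ℕ → F) (q : ℕ) {n : ℕ} (i : Fin n → ℕ) :
    Nvec α q i = ∏ ℓ, Polynomial.aeval (MvPolynomial.X ℓ : MvPolynomial (Fin n) F)
      (Nuni α q (i ℓ)) := by
  rw [Nvec]
  refine Finset.prod_congr rfl fun ℓ _ => ?_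
  rw [Nuni, map_prod]
  refine Finset.prod_congr rfl fun j _ => ?_
  simp [MvPolynomial.algebraMap_eq]

lemma coeff_prod_aeval {n : ℕ} (g : Fin n → Polynomial F) (S : Finset (Fin n))
    (m : Fin n →₀ ℕ) :
    MvPolynomial.coeff m (∏ ℓ ∈ S, Polynomial.aeval (MvPolynomial.X ℓ) (g ℓ)) =
      if ∀ ℓ ∉ S, m ℓ = 0 then ∏ ℓ ∈ S, (g ℓ).coeff (m ℓ) else 0 := by
  classical
  induction S using Finset.induction_on generalizing m with
  | empty =>
      simp only [Finset.prod_empty, MvPolynomial.coeff_one, Finset.notMem_empty,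
        not_false_iff, forall_true_left]
      by_cases h : m = 0
      · subst h; simp
      · rw [if_neg (fun h' => h h'.symm), if_neg]
        intro hall
        exact h (Finsupp.ext fun ℓ => hall ℓ)
  | @insert a S ha IH =>
      rw [Finset.prod_insert ha]
      have hexp : (Polynomial.aeval (MvPolynomial.X a : MvPolynomial (Fin n) F)) (g a)
          = ∑ k ∈ (g a).support,
              MvPolynomial.monomial (Finsupp.single a k) ((g a).coeff k) := by
        conv_lhs => rw [(g a).as_sum_support]
        rw [map_sum]
        refine Finset.sum_congr rfl fun k _ => ?_
        rw [Polynomial.aeval_monomial, MvPolynomial.algebraMap_eq,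
          MvPolynomial.X_pow_eq_monomial, MvPolynomial.C_mul_monomial, mul_one]
      rw [hexp, Finset.sum_mul, MvPolynomial.coeff_sum]
      by_cases H : ∀ ℓ ∉ insert a S, m ℓ = 0
      · rw [if_pos H, Finset.prod_insert ha]
        rw [Finset.sum_eq_single (m a)]
        · rw [MvPolynomial.coeff_monomial_mul',
            if_pos (Finsupp.single_le_iff.mpr le_rfl), IH, if_pos]
          · congr 1
            refine Finset.prod_congr rfl fun ℓ hℓ => ?_
            have hla : ℓ ≠ a := fun h => ha (h ▸ hℓ)
            rw [Finsupp.tsub_apply, Finsupp.single_apply, if_neg (Ne.symm hla),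
              Nat.sub_zero]
          · intro ℓ hℓ
            by_cases hla : ℓ = a
            · subst hla
              simp [Finsupp.tsub_apply]
            · rw [Finsupp.tsub_apply, Finsupp.single_apply, if_neg (Ne.symm hla),
                Nat.sub_zero]
              exact H ℓ (by simp [hla, hℓ])
        · intro k _ hkne
          rw [MvPolynomial.coeff_monomial_mul']
          by_cases hk2 : Finsupp.single a k ≤ m
          · rw [if_pos hk2, IH, if_neg, mul_zero]
            intro hall
            have h1 := hall a ha
            rw [Finsupp.tsub_apply, Finsupp.single_apply, if_pos rfl] at h1
            have h2 : k ≤ m a := Finsupp.single_le_iff.mp hk2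
            exact hkne (by omega)
          · rw [if_neg hk2]
        · intro hma
          rw [MvPolynomial.coeff_monomial_mul',
            if_pos (Finsupp.single_le_iff.mpr le_rfl),
            Polynomial.notMem_support_iff.mp hma, zero_mul]
      · rw [if_neg H]
        push_neg at H
        obtain ⟨ℓ₀, hℓ₀, hm0⟩ := H
        have hℓ₀a : ℓ₀ ≠ a := fun h => hℓ₀ (h ▸ Finset.mem_insert_self a S)
        have hℓ₀S : ℓ₀ ∉ S := fun h => hℓ₀ (Finset.mem_insert_of_mem h)
        refine Finset.sum_eq_zero fun k _ => ?_
        rw [MvPolynomial.coeff_monomial_mul']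
        split_ifs with hk2
        · rw [IH, if_neg, mul_zero]
          intro hall
          have h1 := hall ℓ₀ hℓ₀S
          rw [Finsupp.tsub_apply, Finsupp.single_apply, if_neg (Ne.symm hℓ₀a),
            Nat.sub_zero] at h1
          exact hm0 h1
        · rfl

lemma coeff_nvec (α : ℕ → F) (q : ℕ) {n : ℕ} (i : Fin n → ℕ) (m : Fin n →₀ ℕ) :
    MvPolynomial.coeff m (Nvec α q i) = ∏ ℓ, (Nuni α q (i ℓ)).coeff (m ℓ) := by
  rw [nvec_eq_prod, coeff_prod_aeval, if_pos]
  intro ℓ h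
  exact absurd (Finset.mem_univ ℓ) h

noncomputable def theta {n : ℕ} (pt : Fin n → F) :
    MvPolynomial (Fin n) F →ₐ[F] MvPolynomial (Fin n) F :=
  MvPolynomial.aeval (fun ℓ => MvPolynomial.C (pt ℓ) + MvPolynomial.X ℓ)

lemma eev_eq_coeff_theta (α : ℕ → F) (q : ℕ) {n : ℕ} (P : MvPolynomial (Fin n) F)
    (j : Fin n → ℕ) :
    Eev α q P j = MvPolynomial.coeff (Finsupp.equivFunOnFinite.symm fun ℓ => j ℓ / q)
      (theta (fun ℓ => α (j ℓ % q)) P) := by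
  rw [Eev, mvHasseDeriv]
  set pt : Fin n → F := fun ℓ => α (j ℓ % q) with hpt
  set t : Fin n →₀ ℕ := Finsupp.equivFunOnFinite.symm fun ℓ => j ℓ / q with ht
  rw [show MvPolynomial.eval pt (MvPolynomial.coeff t
      (MvPolynomial.eval₂ (MvPolynomial.C.comp MvPolynomial.C)
        (fun i => MvPolynomial.C (MvPolynomial.X i) + MvPolynomial.X i) P))
    = MvPolynomial.coeff t ((MvPolynomial.map (MvPolynomial.eval pt))
      (MvPolynomial.eval₂ (MvPolynomial.C.comp MvPolynomial.C)
        (fun i => MvPolynomial.C (MvPolynomial.X i) + MvPolynomial.X i) P))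
    from (MvPolynomial.coeff_map _ _ _).symm]
  congr 1
  rw [show (MvPolynomial.map (MvPolynomial.eval pt))
      (MvPolynomial.eval₂ (MvPolynomial.C.comp MvPolynomial.C)
        (fun i => MvPolynomial.C (MvPolynomial.X i) + MvPolynomial.X i) P)
    = MvPolynomial.eval₂
        ((MvPolynomial.map (MvPolynomial.eval pt)).comp
          (MvPolynomial.C.comp MvPolynomial.C))
        ((MvPolynomial.map (MvPolynomial.eval pt)) ∘
          (fun i => MvPolynomial.C (MvPolynomial.X i) + MvPolynomial.X i)) P
    from MvPolynomial.eval₂_comp_left _ _ _ _]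
  rw [theta, MvPolynomial.aeval_def, MvPolynomial.algebraMap_eq]
  have hf : ((MvPolynomial.map (MvPolynomial.eval pt)).comp
      (MvPolynomial.C.comp MvPolynomial.C))
      = (MvPolynomial.C : F →+* MvPolynomial (Fin n) F) := by
    refine RingHom.ext fun r => ?_
    simp
  have hg : ((MvPolynomial.map (MvPolynomial.eval pt)) ∘
      (fun i => MvPolynomial.C (MvPolynomial.X i) + MvPolynomial.X i))
      = fun i => MvPolynomial.C (pt i) + MvPolynomial.X i := by
    funext i
    simp
  rw [hf, hg]

lemma eev_sub (α : ℕ → F) (q : ℕ) {n : ℕ} (P Q : MvPolynomial (Fin n) F)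
    (j : Fin n → ℕ) : Eev α q (P - Q) j = Eev α q P j - Eev α q Q j := by
  simp [eev_eq_coeff_theta, MvPolynomial.coeff_sub]

lemma eev_sum (α : ℕ → F) (q : ℕ) {n : ℕ} {κ : Type*} (T : Finset κ)
    (f : κ → MvPolynomial (Fin n) F) (j : Fin n → ℕ) :
    Eev α q (∑ k ∈ T, f k) j = ∑ k ∈ T, Eev α q (f k) j := by
  simp [eev_eq_coeff_theta, MvPolynomial.coeff_sum]

lemma eev_smul (α : ℕ → F) (q : ℕ) {n : ℕ} (c : F) (P : MvPolynomial (Fin n) F)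
    (j : Fin n → ℕ) : Eev α q (c • P) j = c * Eev α q P j := by
  simp [eev_eq_coeff_theta, MvPolynomial.smul_eq_C_mul, MvPolynomial.coeff_C_mul]

lemma eev_nvec (α : ℕ → F) (q : ℕ) {n : ℕ} (i j : Fin n → ℕ) :
    Eev α q (Nvec α q i) j = ∏ ℓ, Euni α q (Nuni α q (i ℓ)) (j ℓ) := by
  rw [eev_eq_coeff_theta, nvec_eq_prod, map_prod]
  have hfac : ∀ ℓ, theta (fun ℓ' => α (j ℓ' % q))
      ((Polynomial.aeval (MvPolynomial.X ℓ : MvPolynomial (Fin n) F)) (Nuni α q (i ℓ)))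
      = (Polynomial.aeval (MvPolynomial.X ℓ : MvPolynomial (Fin n) F))
          (Polynomial.taylor (α (j ℓ % q)) (Nuni α q (i ℓ))) := by
    intro ℓ
    rw [← Polynomial.aeval_algHom_apply, Polynomial.taylor_apply, Polynomial.aeval_comp]
    congr 1
    simp [theta, MvPolynomial.algebraMap_eq, add_comm]
  rw [Finset.prod_congr rfl fun ℓ _ => hfac ℓ, coeff_prod_aeval, if_pos]
  · refine Finset.prod_congr rfl fun ℓ _ => ?_
    rw [euni_eq_taylor]
    congr 1
  · intro ℓ h
    exact absurd (Finset.mem_univ ℓ) h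

lemma monomial_mem_span (α : ℕ → F) (q : ℕ) {n : ℕ} :
    ∀ (N : ℕ) (m : Fin n →₀ ℕ), (∑ ℓ, m ℓ) ≤ N →
    MvPolynomial.monomial m (1 : F) ∈
      Submodule.span F (Nvec α q '' {i : Fin n → ℕ | ∑ ℓ, i ℓ ≤ ∑ ℓ, m ℓ}) := by
  intro N
  induction N using Nat.strong_induction_on with
  | _ N IH =>
    intro m hm
    have key : MvPolynomial.monomial m (1 : F)
        = Nvec α q ⇑m - (Nvec α q ⇑m - MvPolynomial.monomial m 1) := by ring
    rw [key]
    refine sub_mem (Submodule.subset_span ⟨⇑m, by simp, rfl⟩) ?_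
    set R := Nvec α q ⇑m - MvPolynomial.monomial m (1 : F) with hR
    rw [← MvPolynomial.support_sum_monomial_coeff R]
    refine Submodule.sum_mem _ fun m' hm' => ?_
    have hcne : MvPolynomial.coeff m' R ≠ 0 := MvPolynomial.mem_support_iff.mp hm'
    have hcoef : MvPolynomial.coeff m' R
        = (∏ ℓ, (Nuni α q (m ℓ)).coeff (m' ℓ)) - (if m = m' then 1 else 0) := by
      rw [hR, MvPolynomial.coeff_sub, coeff_nvec, MvPolynomial.coeff_monomial]
    have hne : m' ≠ m := by
      rintro rfl
      rw [hcoef, if_pos rfl] at hcne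
      exact hcne (by simp [nuni_coeff_self])
    have hprod : (∏ ℓ, (Nuni α q (m ℓ)).coeff (m' ℓ)) ≠ 0 := by
      intro h0
      rw [hcoef, if_neg (Ne.symm hne), h0, sub_zero] at hcne
      exact hcne rfl
    have hle : ∀ ℓ, m' ℓ ≤ m ℓ := by
      intro ℓ
      by_contra hlt
      exact hprod (Finset.prod_eq_zero (Finset.mem_univ ℓ)
        (nuni_coeff_eq_zero α q (by omega)))
    have hlt : ∑ ℓ, m' ℓ < ∑ ℓ, m ℓ := by
      obtain ⟨ℓ0, hℓ0⟩ : ∃ ℓ0, m' ℓ0 ≠ m ℓ0 := by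
        by_contra hno
        push_neg at hno
        exact hne (Finsupp.ext hno)
      exact Finset.sum_lt_sum (fun ℓ _ => hle ℓ)
        ⟨ℓ0, Finset.mem_univ ℓ0, lt_of_le_of_ne (hle ℓ0) hℓ0⟩
    have hmono : MvPolynomial.monomial m' (MvPolynomial.coeff m' R)
        = (MvPolynomial.coeff m' R) • MvPolynomial.monomial m' (1 : F) := by
      rw [MvPolynomial.smul_monomial, smul_eq_mul, mul_one]
    rw [hmono]
    refine Submodule.smul_mem _ _ ?_
    refine Submodule.span_mono ?_ (IH (∑ ℓ, m' ℓ) (by omega) m' le_rfl)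
    exact Set.image_mono fun i hi => le_trans hi (le_of_lt hlt)

end MultAux

theorem stmt8 {F : Type*} [Field F] [Fintype F] (q : ℕ) (hq : Fintype.card F = q)
    (α : ℕ → F) (hinj : ∀ a < q, ∀ b < q, α a = α b → a = b)
    {n : ℕ} (d s : ℕ) (hds : d < s * q)
    (P Q : MvPolynomial (Fin n) F)
    (hP : P.totalDegree ≤ d) (hQ : Q.totalDegree ≤ d)
    (h : ∀ j t : Fin n → ℕ, (∀ ℓ, j ℓ < q) → (∑ ℓ, t ℓ) < s →
      MvPolynomial.eval (fun ℓ => α (j ℓ))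
          (mvHasseDeriv (Finsupp.equivFunOnFinite.symm t) P)
        = MvPolynomial.eval (fun ℓ => α (j ℓ))
          (mvHasseDeriv (Finsupp.equivFunOnFinite.symm t) Q)) :
    P = Q := by
  classical
  open MultAux in
  have hq0 : 0 < q := hq ▸ Fintype.card_pos
  rw [← sub_eq_zero]
  set D := P - Q with hD
  by_contra hDne
  have hvanish : ∀ i : Fin n → ℕ, (∑ ℓ, i ℓ) ≤ d → Eev α q D i = 0 := by
    intro i hi
    have hsum : (∑ ℓ, i ℓ / q) < s := by
      have h1 : (∑ ℓ, i ℓ / q) * q ≤ ∑ ℓ, i ℓ := by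
        rw [Finset.sum_mul]
        exact Finset.sum_le_sum fun ℓ _ => Nat.div_mul_le_self _ _
      exact Nat.lt_of_mul_lt_mul_right
        (lt_of_le_of_lt (le_trans h1 hi) hds)
    have hPQ := h (fun ℓ => i ℓ % q) (fun ℓ => i ℓ / q)
      (fun ℓ => Nat.mod_lt _ hq0) hsum
    rw [hD, MultAux.eev_sub, sub_eq_zero]
    exact hPQ
  have hDdeg : D.totalDegree ≤ d := by
    rw [hD, sub_eq_add_neg]
    refine le_trans (MvPolynomial.totalDegree_add _ _) ?_
    rw [MvPolynomial.totalDegree_neg]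
    exact max_le hP hQ
  set ι := {k : Fin n → Fin (d + 1) // ∑ ℓ, (k ℓ : ℕ) ≤ d} with hι
  set v : ι → MvPolynomial (Fin n) F := fun k => Nvec α q (fun ℓ => (k.1 ℓ : ℕ)) with hv
  have hmemspan : D ∈ Submodule.span F (Set.range v) := by
    rw [← MvPolynomial.support_sum_monomial_coeff D]
    refine Submodule.sum_mem _ fun m hm => ?_
    have hmd : (∑ ℓ, m ℓ) ≤ d := by
      refine le_trans ?_ (le_trans (MvPolynomial.le_totalDegree hm) hDdeg)
      rw [Finsupp.sum_fintype _ _ (fun _ => rfl)]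
    have hmono : MvPolynomial.monomial m (MvPolynomial.coeff m D)
        = (MvPolynomial.coeff m D) • MvPolynomial.monomial m (1 : F) := by
      rw [MvPolynomial.smul_monomial, smul_eq_mul, mul_one]
    rw [hmono]
    refine Submodule.smul_mem _ _ ?_
    refine Submodule.span_mono ?_ (MultAux.monomial_mem_span α q (∑ ℓ, m ℓ) m le_rfl)
    rintro _ ⟨i, hi, rfl⟩
    have hisum : (∑ ℓ, i ℓ) ≤ d := le_trans hi hmd
    have hile : ∀ ℓ, i ℓ ≤ d := by
      intro ℓ
      refine le_trans ?_ hisum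
      exact Finset.single_le_sum (fun ℓ' _ => Nat.zero_le _) (Finset.mem_univ ℓ)
    refine ⟨⟨fun ℓ => ⟨i ℓ, Nat.lt_succ_of_le (hile ℓ)⟩, by simpa using hisum⟩, rfl⟩
  obtain ⟨c, hc⟩ := (Submodule.mem_span_range_iff_exists_fun F).mp hmemspan
  set T := Finset.univ.filter (fun k : ι => c k ≠ 0) with hT
  have hTne : T.Nonempty := by
    rw [Finset.filter_nonempty_iff]
    by_contra hno
    push_neg at hno
    refine hDne ?_
    rw [← hc]
    refine Finset.sum_eq_zero fun k _ => ?_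
    rw [hno k (Finset.mem_univ k), zero_smul]
  obtain ⟨kstar, hkT, hmin⟩ : ∃ kstar ∈ T, ∀ k ∈ T, ¬ k < kstar := by
    obtain ⟨kstar, hk⟩ := Finset.exists_minimal hTne
    exact ⟨kstar, hk.prop, fun k hk' hlt => hk.not_lt hk' hlt⟩
  set istar : Fin n → ℕ := fun ℓ => (kstar.1 ℓ : ℕ) with histar
  have hckstar : c kstar ≠ 0 := (Finset.mem_filter.mp hkT).2
  have hEev0 : Eev α q D istar = 0 := hvanish istar kstar.2
  have hEevD : Eev α q D istar
      = c kstar * ∏ ℓ, Euni α q (Nuni α q (istar ℓ)) (istar ℓ) := by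
    rw [← hc, MultAux.eev_sum]
    rw [Finset.sum_eq_single kstar]
    · rw [MultAux.eev_smul, MultAux.eev_nvec]
    · intro k _ hkne
      rw [MultAux.eev_smul, MultAux.eev_nvec]
      by_cases hck : c k = 0
      · rw [hck, zero_mul]
      · have hkT' : k ∈ T := Finset.mem_filter.mpr ⟨Finset.mem_univ k, hck⟩
        have hnotlt : ¬ k < kstar := hmin k hkT'
        have hex : ∃ ℓ, (kstar.1 ℓ : ℕ) < (k.1 ℓ : ℕ) := by
          by_contra hno
          push_neg at hno
          have hle : k ≤ kstar := by
            rw [← Subtype.coe_le_coe, Pi.le_def]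
            intro ℓ
            exact Fin.le_def.mpr (hno ℓ)
          exact hnotlt (lt_of_le_of_ne hle hkne)
        obtain ⟨ℓ0, hℓ0⟩ := hex
        rw [Finset.prod_eq_zero (Finset.mem_univ ℓ0)
          (MultAux.euni_nuni_zero α hq0 hℓ0), mul_zero]
    · intro hk
      exact absurd (Finset.mem_univ kstar) hk
  have hdiag : (∏ ℓ, Euni α q (Nuni α q (istar ℓ)) (istar ℓ)) ≠ 0 :=
    Finset.prod_ne_zero_iff.mpr fun ℓ _ =>
      MultAux.euni_nuni_diag α hq0 hinj (istar ℓ)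
  rw [hEevD] at hEev0
  exact mul_ne_zero hckstar hdiag hEev0
end

section
/- Let I ⊆ N^n be a finite initial segment, F ∈ F_q[X]_I, and write F = Σ_{i_n ∈ ρ(I, 0_{n-1})} F_{i_n}(X_1,...,X_{n-1}) N_{i_n}(X_n) on the Newton basis in the last variable. Then for every \vec{j} = (j_1,...,j_n) ∈ I, E(F,\vec{j}) = E( Σ_{i_n ∈ ρ(I,(j_1,...,j_{n-1}))} E(F_{i_n},(j_1,...,j_{n-1})) N_{i_n}(X_n), j_n ). -/
open MvPolynomial

lemma hasseDeriv_map' {R S : Type*} [CommSemiring R] [CommSemiring S] (f : R →+* S)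
    (m : ℕ) (N : Polynomial R) :
    Polynomial.hasseDeriv m (N.map f) = (Polynomial.hasseDeriv m N).map f := by
  ext k
  simp [Polynomial.hasseDeriv_coeff, Polynomial.coeff_map]

open Classical in
lemma coeff_eval₂CX {σ R : Type*} [CommSemiring R] (i : σ)
    (g : Polynomial (MvPolynomial σ R)) (y : σ →₀ ℕ) :
    MvPolynomial.coeff y (Polynomial.eval₂ MvPolynomial.C (MvPolynomial.X i) g) =
      if y = Finsupp.single i (y i) then g.coeff (y i) else 0 := by
  classical
  rw [Polynomial.eval₂_eq_sum, Polynomial.sum]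
  rw [MvPolynomial.coeff_sum]
  have key : ∀ e : ℕ, MvPolynomial.coeff y (MvPolynomial.C (g.coeff e) * MvPolynomial.X i ^ e)
      = if Finsupp.single i e = y then g.coeff e else 0 := by
    intro e
    rw [MvPolynomial.coeff_C_mul, MvPolynomial.coeff_X_pow]
    split <;> simp
  rw [Finset.sum_congr rfl (fun e _ => key e)]
  by_cases h : y = Finsupp.single i (y i)
  · rw [if_pos h]
    have heq : ∀ e : ℕ, (Finsupp.single i e = y) ↔ e = y i := by
      intro e
      constructor
      · intro h'
        have := congrArg (fun f : σ →₀ ℕ => f i) h'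
        simpa using this
      · intro h'; rw [h', ← h]
    rw [Finset.sum_congr rfl (fun e _ => by rw [if_congr (heq e) rfl rfl])]
    rw [Finset.sum_ite_eq' g.support (y i) g.coeff]
    split
    · rfl
    · exact (Polynomial.notMem_support_iff.mp (by assumption)).symm
  · rw [if_neg h]
    apply Finset.sum_eq_zero
    intro e _
    rw [if_neg]
    intro h'
    apply h
    rw [← h']
    simp

lemma phi_aeval' {σ R : Type*} [CommSemiring R] (i : σ) (N : Polynomial R) :
    MvPolynomial.eval₂ (MvPolynomial.C.comp MvPolynomial.C)
      (fun j => MvPolynomial.C (MvPolynomial.X j) + MvPolynomial.X j)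
      (Polynomial.aeval (MvPolynomial.X i) N)
    = Polynomial.eval₂ MvPolynomial.C (MvPolynomial.X i)
        (Polynomial.taylor (MvPolynomial.X i) (N.map MvPolynomial.C)) := by
  have lhs : MvPolynomial.eval₂ (MvPolynomial.C.comp MvPolynomial.C)
      (fun j => MvPolynomial.C (MvPolynomial.X j) + MvPolynomial.X j)
      (Polynomial.aeval (MvPolynomial.X i) N)
      = (MvPolynomial.eval₂Hom (MvPolynomial.C.comp MvPolynomial.C)
          (fun j => MvPolynomial.C (MvPolynomial.X j) + MvPolynomial.X j))
          (Polynomial.eval₂ MvPolynomial.C (MvPolynomial.X i) N) := by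
    rw [Polynomial.aeval_def]; rfl
  rw [lhs, Polynomial.hom_eval₂]
  rw [Polynomial.taylor_apply, Polynomial.eval₂_comp, Polynomial.eval₂_map]
  congr 1
  · ext r : 1
    simp
  · simp [add_comm]

open Classical in
lemma mvHasseDeriv_aeval {σ R : Type*} [CommSemiring R] (i : σ) (N : Polynomial R)
    (y : σ →₀ ℕ) :
    mvHasseDeriv y (Polynomial.aeval (MvPolynomial.X i) N) =
      if y = Finsupp.single i (y i)
      then Polynomial.aeval (MvPolynomial.X i : MvPolynomial σ R)
        (Polynomial.hasseDeriv (y i) N) else 0 := by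
  unfold mvHasseDeriv
  rw [phi_aeval' i N]
  rw [coeff_eval₂CX]
  rw [Polynomial.taylor_coeff]
  rw [hasseDeriv_map']
  rw [Polynomial.eval_map]
  rw [Polynomial.aeval_def]
  rw [MvPolynomial.algebraMap_eq]

lemma phi_rename {σ τ R : Type*} [CommSemiring R] (f : σ → τ) (G : MvPolynomial σ R) :
    MvPolynomial.eval₂ (MvPolynomial.C.comp MvPolynomial.C)
      (fun j => MvPolynomial.C (MvPolynomial.X j) + MvPolynomial.X j)
      (MvPolynomial.rename f G)
    = MvPolynomial.rename f (MvPolynomial.map (MvPolynomial.rename f).toRingHom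
        (MvPolynomial.eval₂ (MvPolynomial.C.comp MvPolynomial.C)
          (fun j => MvPolynomial.C (MvPolynomial.X j) + MvPolynomial.X j) G)) := by
  induction G using MvPolynomial.induction_on with
  | C a => simp
  | add p q hp hq => simp [MvPolynomial.eval₂_add, hp, hq]
  | mul_X p i hp =>
      simp [MvPolynomial.eval₂_mul, MvPolynomial.eval₂_add, hp, mul_add]

lemma mvHasseDeriv_rename_mapDomain {σ τ R : Type*} [CommSemiring R] (f : σ → τ)
    (hf : Function.Injective f) (G : MvPolynomial σ R) (u : σ →₀ ℕ) :
    mvHasseDeriv (u.mapDomain f) (MvPolynomial.rename f G)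
      = MvPolynomial.rename f (mvHasseDeriv u G) := by
  unfold mvHasseDeriv
  rw [phi_rename, MvPolynomial.coeff_rename_mapDomain f hf, MvPolynomial.coeff_map]
  rfl

lemma mvHasseDeriv_rename_eq_zero {σ τ R : Type*} [CommSemiring R] (f : σ → τ)
    (G : MvPolynomial σ R) (x : τ →₀ ℕ) (t : τ) (ht : t ∉ Set.range f) (hx : x t ≠ 0) :
    mvHasseDeriv x (MvPolynomial.rename f G) = 0 := by
  unfold mvHasseDeriv
  rw [phi_rename]
  apply MvPolynomial.coeff_rename_eq_zero
  intro u hu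
  exact absurd (by rw [← hu]; exact Finsupp.mapDomain_notin_range u t ht) hx

lemma last_not_range {n : ℕ} :
    Fin.last n ∉ Set.range (Fin.castSucc : Fin n → Fin (n + 1)) := by
  rintro ⟨ℓ, h⟩
  exact absurd h (Fin.castSucc_lt_last ℓ).ne

lemma euni_nuni_vanish {F : Type*} [Field F] (α : ℕ → F) (q : ℕ) (hq : 0 < q)
    (k j : ℕ) (hjk : j < k) : Euni α q (Nuni α q k) j = 0 := by
  classical
  have hcard : j / q + 1 ≤ ((Finset.range k).filter (fun m => m % q = j % q)).card := by
    have hmem : ∀ m ∈ Finset.range (j / q + 1),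
        j % q + m * q ∈ (Finset.range k).filter (fun m => m % q = j % q) := by
      intro m hm
      rw [Finset.mem_range, Nat.lt_succ_iff] at hm
      refine Finset.mem_filter.mpr ⟨Finset.mem_range.mpr ?_, ?_⟩
      · calc j % q + m * q ≤ j % q + j / q * q := by
              exact Nat.add_le_add_left (Nat.mul_le_mul_right q hm) _
          _ = j := Nat.mod_add_div' j q
          _ < k := hjk
      · rw [Nat.add_mul_mod_self_right]
        exact Nat.mod_mod_of_dvd j dvd_rfl
    have hinj : Set.InjOn (fun m => j % q + m * q) (Finset.range (j / q + 1)) := by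
      intro a _ b _ hab
      simp only at hab
      have := Nat.add_left_cancel hab
      exact Nat.eq_of_mul_eq_mul_right hq this
    calc j / q + 1 = (Finset.range (j / q + 1)).card := (Finset.card_range _).symm
      _ ≤ _ := Finset.card_le_card_of_injOn _ hmem hinj
  set c := ((Finset.range k).filter (fun m => m % q = j % q)).card with hc
  have hfac : Nuni α q k = (Polynomial.X - Polynomial.C (α (j % q))) ^ c *
      ∏ m ∈ (Finset.range k).filter (fun m => ¬ m % q = j % q),
        (Polynomial.X - Polynomial.C (α (m % q))) := by
    rw [Nuni, ← Finset.prod_filter_mul_prod_filter_not (Finset.range k)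
      (fun m => m % q = j % q)]
    congr 1
    rw [Finset.prod_congr rfl (fun m hm => by rw [(Finset.mem_filter.mp hm).2]),
      Finset.prod_const]
  rw [Euni, hfac, ← Polynomial.taylor_coeff, Polynomial.taylor_mul]
  have htp : Polynomial.taylor (α (j % q)) ((Polynomial.X - Polynomial.C (α (j % q))) ^ c)
      = Polynomial.X ^ c := by
    rw [Polynomial.taylor_apply, Polynomial.pow_comp, Polynomial.sub_comp,
      Polynomial.X_comp, Polynomial.C_comp, add_sub_cancel_right]
  rw [htp, mul_comm, Polynomial.coeff_mul_X_pow']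
  rw [if_neg]
  omega

lemma Eev_mul_split {F : Type*} [Field F] (α : ℕ → F) (q : ℕ) {n : ℕ}
    (Gk : MvPolynomial (Fin n) F) (N : Polynomial F) (jv : Fin (n + 1) → ℕ) :
    Eev α q (MvPolynomial.rename Fin.castSucc Gk *
        Polynomial.aeval (MvPolynomial.X (Fin.last n)) N) jv
      = Eev α q Gk (fun ℓ => jv ℓ.castSucc) * Euni α q N (jv (Fin.last n)) := by
  classical
  set s : Fin (n + 1) →₀ ℕ := Finsupp.equivFunOnFinite.symm (fun ℓ => jv ℓ / q) with hs
  set u : Fin n →₀ ℕ := Finsupp.equivFunOnFinite.symm (fun ℓ => jv ℓ.castSucc / q) with hu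
  set a : Fin (n + 1) →₀ ℕ := Finsupp.mapDomain Fin.castSucc u with ha
  set b : Fin (n + 1) →₀ ℕ := Finsupp.single (Fin.last n) (jv (Fin.last n) / q) with hb
  have hs_app : ∀ x, s x = jv x / q := fun x => rfl
  have ha_cast : ∀ ℓ : Fin n, a (Fin.castSucc ℓ) = jv ℓ.castSucc / q := by
    intro ℓ
    rw [ha, Finsupp.mapDomain_apply (Fin.castSucc_injective n)]
    rfl
  have ha_last : a (Fin.last n) = 0 := by
    rw [ha]
    exact Finsupp.mapDomain_notin_range u _ last_not_range
  have hab : a + b = s := by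
    ext x
    refine Fin.lastCases ?_ ?_ x
    · simp [ha_last, hb, hs_app]
    · intro ℓ
      rw [Finsupp.add_apply, ha_cast, hb, Finsupp.single_apply,
        if_neg (Fin.castSucc_lt_last ℓ).ne', hs_app, add_zero]
  have key : mvHasseDeriv s (MvPolynomial.rename Fin.castSucc Gk *
        Polynomial.aeval (MvPolynomial.X (Fin.last n)) N)
      = MvPolynomial.rename Fin.castSucc (mvHasseDeriv u Gk) *
        Polynomial.aeval (MvPolynomial.X (Fin.last n))
          (Polynomial.hasseDeriv (jv (Fin.last n) / q) N) := by
    show MvPolynomial.coeff s _ = _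
    rw [MvPolynomial.eval₂_mul, MvPolynomial.coeff_mul]
    have hmem : (a, b) ∈ Finset.HasAntidiagonal.antidiagonal s := Finset.HasAntidiagonal.mem_antidiagonal.mpr hab
    have hother : ∀ p ∈ Finset.HasAntidiagonal.antidiagonal s, p ≠ (a, b) →
        mvHasseDeriv p.1 (MvPolynomial.rename Fin.castSucc Gk) *
          mvHasseDeriv p.2 (Polynomial.aeval (MvPolynomial.X (Fin.last n)) N) = 0 := by
      intro p hp hne
      by_cases h1 : p.1 (Fin.last n) = 0
      · by_cases h2 : p.2 = Finsupp.single (Fin.last n) (p.2 (Fin.last n))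
        · exfalso
          apply hne
          have hsum : p.1 + p.2 = s := Finset.HasAntidiagonal.mem_antidiagonal.mp hp
          have h2last : p.2 (Fin.last n) = jv (Fin.last n) / q := by
            have := congrArg (fun f : Fin (n + 1) →₀ ℕ => f (Fin.last n)) hsum
            simpa [h1, hs_app] using this
          have hp2 : p.2 = b := by rw [h2, h2last]
          have hp1 : p.1 = a := by
            ext x
            refine Fin.lastCases ?_ ?_ x
            · rw [h1, ha_last]
            · intro ℓ
              have hx := congrArg (fun f : Fin (n + 1) →₀ ℕ => f (Fin.castSucc ℓ)) hsum
              have h2c : p.2 (Fin.castSucc ℓ) = 0 := by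
                rw [h2, Finsupp.single_apply, if_neg (Fin.castSucc_lt_last ℓ).ne']
              simp only [Finsupp.add_apply, h2c, add_zero] at hx
              rw [hx, ha_cast, hs_app]
          exact Prod.ext hp1 hp2
        · rw [mvHasseDeriv_aeval, if_neg h2, mul_zero]
      · rw [mvHasseDeriv_rename_eq_zero Fin.castSucc Gk p.1 (Fin.last n) last_not_range h1,
          zero_mul]
    calc (∑ p ∈ Finset.HasAntidiagonal.antidiagonal s,
          MvPolynomial.coeff p.1 (MvPolynomial.eval₂ (MvPolynomial.C.comp MvPolynomial.C)
            (fun i => MvPolynomial.C (MvPolynomial.X i) + MvPolynomial.X i)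
            (MvPolynomial.rename Fin.castSucc Gk)) *
          MvPolynomial.coeff p.2 (MvPolynomial.eval₂ (MvPolynomial.C.comp MvPolynomial.C)
            (fun i => MvPolynomial.C (MvPolynomial.X i) + MvPolynomial.X i)
            (Polynomial.aeval (MvPolynomial.X (Fin.last n)) N)))
        = mvHasseDeriv a (MvPolynomial.rename Fin.castSucc Gk) *
          mvHasseDeriv b (Polynomial.aeval (MvPolynomial.X (Fin.last n)) N) :=
          Finset.sum_eq_single_of_mem (a, b) hmem (fun p hp hne => hother p hp hne)
      _ = _ := by
          rw [ha, mvHasseDeriv_rename_mapDomain Fin.castSucc (Fin.castSucc_injective n)]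
          rw [mvHasseDeriv_aeval]
          rw [if_pos (by rw [hb, Finsupp.single_eq_same]), hb, Finsupp.single_eq_same]
  show MvPolynomial.eval _ (mvHasseDeriv s _) = _
  rw [key, map_mul, MvPolynomial.eval_rename]
  congr 1
  rw [Polynomial.aeval_def, MvPolynomial.algebraMap_eq, Polynomial.hom_eval₂]
  have hid : (MvPolynomial.eval fun ℓ => α (jv ℓ % q)).comp
      (MvPolynomial.C : F →+* MvPolynomial (Fin (n + 1)) F) = RingHom.id F := by
    ext r
    simp
  rw [hid, MvPolynomial.eval_X]
  rfl

lemma Eev_sum {F : Type*} [Field F] (α : ℕ → F) (q : ℕ) {n : ℕ} {ι : Type*}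
    {S : Finset ι} {f : ι → MvPolynomial (Fin n) F} {j : Fin n → ℕ} :
    Eev α q (∑ k ∈ S, f k) j = ∑ k ∈ S, Eev α q (f k) j := by
  unfold Eev mvHasseDeriv
  rw [show (MvPolynomial.eval₂ (MvPolynomial.C.comp MvPolynomial.C)
      (fun i => MvPolynomial.C (MvPolynomial.X i) + MvPolynomial.X i) (∑ k ∈ S, f k))
    = ∑ k ∈ S, MvPolynomial.eval₂ (MvPolynomial.C.comp MvPolynomial.C)
      (fun i => MvPolynomial.C (MvPolynomial.X i) + MvPolynomial.X i) (f k) from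
    map_sum (MvPolynomial.eval₂Hom _ _) f S]
  rw [MvPolynomial.coeff_sum, map_sum]

lemma Euni_sum {F : Type*} [Field F] (α : ℕ → F) (q : ℕ) {ι : Type*}
    {S : Finset ι} {f : ι → Polynomial F} {j : ℕ} :
    Euni α q (∑ k ∈ S, f k) j = ∑ k ∈ S, Euni α q (f k) j := by
  unfold Euni
  rw [map_sum, Polynomial.eval_finset_sum]

lemma Euni_C_mul {F : Type*} [Field F] (α : ℕ → F) (q : ℕ) (c : F) (N : Polynomial F)
    (j : ℕ) : Euni α q (Polynomial.C c * N) j = c * Euni α q N j := by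
  unfold Euni
  rw [← Polynomial.smul_eq_C_mul, map_smul, Polynomial.eval_smul, smul_eq_mul]

theorem stmt9 {F : Type*} [Field F] [Fintype F] (q : ℕ) (hq : Fintype.card F = q)
    (α : ℕ → F) (hinj : ∀ a < q, ∀ b < q, α a = α b → a = b)
    {n : ℕ} (I : Finset (Fin (n + 1) → ℕ)) (hne : I.Nonempty)
    (hdc : ∀ i j : Fin (n + 1) → ℕ, i ≤ j → j ∈ I → i ∈ I)
    (P : MvPolynomial (Fin (n + 1)) F) (hP : ∀ mo ∈ P.support, ⇑mo ∈ I)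
    (G : ℕ → MvPolynomial (Fin n) F)
    (hG : P = ∑ k ∈ I.image (fun v => v (Fin.last n)),
        MvPolynomial.rename Fin.castSucc (G k) *
          ∏ j ∈ Finset.range k,
            (MvPolynomial.X (Fin.last n) - MvPolynomial.C (α (j % q))))
    (jv : Fin (n + 1) → ℕ) (hjv : jv ∈ I) :
    Eev α q P jv =
      Euni α q
        (∑ k ∈ (I.image fun v => v (Fin.last n)).filter
            (fun k => Fin.snoc (fun ℓ : Fin n => jv ℓ.castSucc) k ∈ I),
          Polynomial.C (Eev α q (G k) fun ℓ : Fin n => jv ℓ.castSucc) * Nuni α q k)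
        (jv (Fin.last n)) := by
  have hq0 : 0 < q := hq ▸ Fintype.card_pos
  have hprod : ∀ k : ℕ,
      (∏ j ∈ Finset.range k, (MvPolynomial.X (Fin.last n) - MvPolynomial.C (α (j % q)) :
        MvPolynomial (Fin (n + 1)) F))
      = Polynomial.aeval (MvPolynomial.X (Fin.last n)) (Nuni α q k) := by
    intro k
    rw [Nuni, map_prod]
    refine Finset.prod_congr rfl fun m _ => ?_
    rw [map_sub, Polynomial.aeval_X, Polynomial.aeval_C, MvPolynomial.algebraMap_eq]
  rw [hG, Eev_sum]
  rw [Finset.sum_congr rfl (fun k _ => by rw [hprod k, Eev_mul_split])]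
  rw [Euni_sum]
  rw [Finset.sum_congr rfl (fun k _ =>
    Euni_C_mul α q (Eev α q (G k) fun ℓ : Fin n => jv ℓ.castSucc) (Nuni α q k)
      (jv (Fin.last n)))]
  rw [Finset.sum_filter_of_ne]
  intro k hk hne
  by_contra hni
  have hk_gt : jv (Fin.last n) < k := by
    by_contra hle
    push_neg at hle
    apply hni
    refine hdc _ jv ?_ hjv
    intro x
    refine Fin.lastCases ?_ ?_ x
    · rw [Fin.snoc_last]; exact hle
    · intro ℓ
      rw [Fin.snoc_castSucc]
  exact hne (by rw [euni_nuni_vanish α q hq0 k (jv (Fin.last n)) hk_gt, mul_zero])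
end

section
/- Let d, s be integers with d+1 < sq, s > 0, and let r = max(floor((d+1)/q), 0). Suppose F ∈ F_q[X] is a linear combination of Newton polynomials N_i with indices i in R_{d,s,1} = [sq] \ {0,...,d}. Then N_{rq} = (X^q - X)^r divides F, and writing Q = F/N_{rq}, for each j ∈ [q]: F(X+α_j) mod X^s = X^r · ((X^{q-1}-1)^r · Q(X+α_j) mod X^{s-r}). -/
open MvPolynomial

open Polynomial

lemma aux_prod_univ {F : Type*} [Field F] [Fintype F] (q : ℕ) (hq : Fintype.card F = q) :
    ∏ a : F, (Polynomial.X - Polynomial.C a) = Polynomial.X ^ q - Polynomial.X := by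
  subst hq
  have h1 : 1 < Fintype.card F := Fintype.one_lt_card
  have hmon : (Polynomial.X ^ (Fintype.card F) - Polynomial.X : Polynomial F).Monic :=
    (monic_X_pow _).sub_of_left (by rw [degree_X_pow, degree_X]; exact_mod_cast h1)
  have hroots := FiniteField.roots_X_pow_card_sub_X F
  have hdeg := FiniteField.X_pow_card_sub_X_natDegree_eq F h1
  have h := prod_multiset_X_sub_C_of_monic_of_roots_card_eq hmon (by rw [hroots, hdeg]; simp)
  rw [hroots] at h
  rw [← h]
  rfl

lemma aux_Nq {F : Type*} [Field F] [Fintype F] (q : ℕ) (hq : Fintype.card F = q)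
    (α : ℕ → F) (hinj : ∀ a < q, ∀ b < q, α a = α b → a = b) :
    ∏ j ∈ Finset.range q, (Polynomial.X - Polynomial.C (α (j % q))) = Polynomial.X ^ q - Polynomial.X := by
  classical
  rw [Finset.prod_congr rfl
    (fun j hj => by rw [Nat.mod_eq_of_lt (Finset.mem_range.mp hj)] :
      ∀ j ∈ Finset.range q, Polynomial.X - Polynomial.C (α (j % q)) = Polynomial.X - Polynomial.C (α j))]
  have hinj' : ∀ a ∈ Finset.range q, ∀ b ∈ Finset.range q, α a = α b → a = b :=
    fun a ha b hb h => hinj a (Finset.mem_range.mp ha) b (Finset.mem_range.mp hb) h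
  rw [← Finset.prod_image (f := fun a => Polynomial.X - Polynomial.C a) hinj']
  have himg : (Finset.range q).image α = Finset.univ := by
    apply Finset.eq_univ_of_card
    rw [Finset.card_image_of_injOn (fun a ha b hb h => hinj' a ha b hb h),
      Finset.card_range, hq]
  rw [himg]
  exact aux_prod_univ q hq

lemma aux_Nmul {F : Type*} [Field F] [Fintype F] (q : ℕ) (hq : Fintype.card F = q)
    (α : ℕ → F) (hinj : ∀ a < q, ∀ b < q, α a = α b → a = b) (r : ℕ) :
    Nuni α q (r * q) = (Polynomial.X ^ q - Polynomial.X) ^ r := by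
  induction r with
  | zero => simp [Nuni]
  | succ n ih =>
    rw [Nat.succ_mul, Nuni, Finset.prod_range_add, ← Nuni, ih, pow_succ]
    congr 1
    rw [← aux_Nq q hq α hinj]
    exact Finset.prod_congr rfl fun j _ => by rw [Nat.add_comm, Nat.add_mul_mod_self_right]

lemma aux_dvd {F : Type*} [Field F] (q : ℕ) (α : ℕ → F) {a i : ℕ} (h : a ≤ i) :
    Nuni α q a ∣ Nuni α q i := by
  obtain ⟨b, rfl⟩ := Nat.exists_eq_add_of_le h
  simp only [Nuni]
  rw [Finset.prod_range_add]
  exact dvd_mul_right _ _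

lemma aux_mod_shift {F : Type*} [Field F] (r s : ℕ) (hrs : r ≤ s) (A : Polynomial F) :
    (Polynomial.X ^ r * A) %ₘ Polynomial.X ^ s = Polynomial.X ^ r * (A %ₘ Polynomial.X ^ (s - r)) := by
  have hm : (Polynomial.X ^ (s - r) : Polynomial F).Monic := monic_X_pow _
  have hms : (Polynomial.X ^ s : Polynomial F).Monic := monic_X_pow _
  have hsub : (Polynomial.X ^ s : Polynomial F) ∣ Polynomial.X ^ r * A - Polynomial.X ^ r * (A %ₘ Polynomial.X ^ (s - r)) := by
    rw [← mul_sub]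
    have h2 : A - A %ₘ Polynomial.X ^ (s - r) = Polynomial.X ^ (s - r) * (A /ₘ Polynomial.X ^ (s - r)) := by
      linear_combination -(Polynomial.modByMonic_add_div A (Polynomial.X ^ (s - r)))
    rw [h2, ← mul_assoc, ← pow_add, Nat.add_sub_cancel' hrs]
    exact dvd_mul_right _ _
  rw [modByMonic_eq_of_dvd_sub hms hsub]
  apply (modByMonic_eq_self_iff hms).mpr
  rcases eq_or_ne (A %ₘ Polynomial.X ^ (s - r)) 0 with h | h
  · rw [h, mul_zero, degree_zero, degree_X_pow]
    exact WithBot.bot_lt_coe _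
  · have hd := degree_modByMonic_lt A hm
    rw [degree_X_pow, degree_eq_natDegree h, Nat.cast_lt] at hd
    rw [degree_mul, degree_X_pow, degree_X_pow, degree_eq_natDegree h, ← Nat.cast_add,
      Nat.cast_lt]
    omega

theorem stmt13 {F : Type*} [Field F] [Fintype F] (q : ℕ) (hq : Fintype.card F = q)
    (α : ℕ → F) (hinj : ∀ a < q, ∀ b < q, α a = α b → a = b)
    (d : ℤ) (s : ℕ) (hs : 0 < s) (hd : d + 1 < (s * q : ℕ))
    (r : ℕ) (hr : (r : ℤ) = max ((d + 1).fdiv (q : ℤ)) 0)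
    (c : ℕ → F) (P : Polynomial F)
    (hP : P = ∑ i ∈ (Finset.range (s * q)).filter (fun i : ℕ => d < (i : ℤ)),
        Polynomial.C (c i) * Nuni α q i) :
    Nuni α q (r * q) ∣ P
    ∧ ∀ j < q,
        P.comp (Polynomial.X + Polynomial.C (α j)) %ₘ Polynomial.X ^ s
          = Polynomial.X ^ r *
            (((Polynomial.X ^ (q - 1) - 1) ^ r *
                (P /ₘ Nuni α q (r * q)).comp (Polynomial.X + Polynomial.C (α j)))
              %ₘ Polynomial.X ^ (s - r)) := by
  have h1 : 1 < q := hq ▸ Fintype.one_lt_card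
  have h0 : (0 : ℤ) < (q : ℤ) := by exact_mod_cast Nat.lt_of_lt_of_le Nat.zero_lt_one h1.le
  -- key arithmetic facts
  have hrqle : ∀ i : ℕ, d < (i : ℤ) → r * q ≤ i := by
    intro i hi
    rcases le_total ((d + 1).fdiv (q : ℤ)) 0 with hle | hge
    · have : (r : ℤ) = 0 := by rw [hr, max_eq_right hle]
      have : r = 0 := by exact_mod_cast this
      simp [this]
    · have hre : (r : ℤ) = (d + 1).fdiv (q : ℤ) := by rw [hr, max_eq_left hge]
      have hfd : (d + 1).fdiv (q : ℤ) = (d + 1) / (q : ℤ) := Int.fdiv_eq_ediv_of_nonneg _ h0.le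
      have h2 : (r : ℤ) * q ≤ d + 1 := by
        rw [hre, hfd]; exact Int.ediv_mul_le _ (ne_of_gt h0)
      have : (r : ℤ) * (q : ℤ) ≤ (i : ℤ) := le_trans h2 (by omega)
      exact_mod_cast this
  have hrs : r < s := by
    rcases le_total ((d + 1).fdiv (q : ℤ)) 0 with hle | hge
    · have : (r : ℤ) = 0 := by rw [hr, max_eq_right hle]
      have : r = 0 := by exact_mod_cast this
      omega
    · have hre : (r : ℤ) = (d + 1).fdiv (q : ℤ) := by rw [hr, max_eq_left hge]
      have hfd : (d + 1).fdiv (q : ℤ) = (d + 1) / (q : ℤ) := Int.fdiv_eq_ediv_of_nonneg _ h0.le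
      have h2 : (r : ℤ) * q ≤ d + 1 := by
        rw [hre, hfd]; exact Int.ediv_mul_le _ (ne_of_gt h0)
      have h3 : (r : ℤ) * q < (s : ℤ) * q := by
        calc (r : ℤ) * q ≤ d + 1 := h2
        _ < ((s * q : ℕ) : ℤ) := hd
        _ = (s : ℤ) * q := by push_cast; ring
      have := lt_of_mul_lt_mul_right h3 h0.le
      exact_mod_cast this
  have hdvd : Nuni α q (r * q) ∣ P := by
    rw [hP]
    apply Finset.dvd_sum
    intro i hi
    obtain ⟨-, hdi⟩ := Finset.mem_filter.mp hi
    exact (aux_dvd q α (hrqle i hdi)).mul_left _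
  refine ⟨hdvd, ?_⟩
  intro j hj
  set N := Nuni α q (r * q) with hNdef
  have hNmon : N.Monic := monic_prod_of_monic _ _ fun i _ => monic_X_sub_C _
  have hNval : N = (Polynomial.X ^ q - Polynomial.X) ^ r := aux_Nmul q hq α hinj r
  have hPQ : P = N * (P /ₘ N) := by
    conv_lhs => rw [← modByMonic_add_div P N]
    rw [(modByMonic_eq_zero_iff_dvd hNmon).mpr hdvd, zero_add]
  -- Frobenius
  obtain ⟨p, hp⟩ := CharP.exists F
  obtain ⟨n, hpp, hcard⟩ := FiniteField.card F p
  haveI : Fact p.Prime := ⟨hpp⟩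
  rw [hq] at hcard
  have hfrob : ((Polynomial.X + Polynomial.C (α j)) ^ q : Polynomial F) = Polynomial.X ^ q + Polynomial.C (α j) := by
    have hpow : (α j) ^ q = α j := by
      have := FiniteField.pow_card (α j)
      rwa [hq] at this
    rw [hcard, add_pow_char_pow, ← Polynomial.C_pow, ← hcard, hpow]
  have hcomp : N.comp (Polynomial.X + Polynomial.C (α j)) = Polynomial.X ^ r * (Polynomial.X ^ (q - 1) - 1) ^ r := by
    rw [hNval, pow_comp, sub_comp, X_pow_comp, X_comp, hfrob]
    have hXq : (Polynomial.X ^ q : Polynomial F) - Polynomial.X = Polynomial.X * (Polynomial.X ^ (q - 1) - 1) := by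
      have hq1 : q = (q - 1) + 1 := by omega
      calc (Polynomial.X ^ q : Polynomial F) - Polynomial.X = Polynomial.X ^ ((q - 1) + 1) - Polynomial.X := by rw [← hq1]
      _ = Polynomial.X * (Polynomial.X ^ (q - 1) - 1) := by rw [pow_succ]; ring
    have : (Polynomial.X ^ q : Polynomial F) + Polynomial.C (α j) - (Polynomial.X + Polynomial.C (α j)) = Polynomial.X ^ q - Polynomial.X := by ring
    rw [this, hXq, mul_pow]
  have key : P.comp (Polynomial.X + Polynomial.C (α j))
      = Polynomial.X ^ r * ((Polynomial.X ^ (q - 1) - 1) ^ r * (P /ₘ N).comp (Polynomial.X + Polynomial.C (α j))) := by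
    conv_lhs => rw [hPQ]
    rw [mul_comp, hcomp]; ring
  rw [key, aux_mod_shift r s hrs.le]
end

section
/- For a prime power q and integers d, s with d < sq and s > 0, define R_{d,s,2} = C_{s,2} \ I_{d,2}, where C_{s,2} = {\vec{i}+q\vec{t} : \vec{i} ∈ [q]^2, \vec{t} ∈ N^2, |\vec{t}| < s} and I_{d,2} = {\vec{i} ∈ N^2 : |\vec{i}| ≤ d}. Then |R_{sq-1,s,2}| = s·binom(q,2), and for any d < sq, |R_{d,s,2}| ≥ s·binom(q,2). -/
open MvPolynomial

lemma key (q s : ℕ) (hq : 0 < q) (hs : 0 < s) :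
    (Rset q ((s : ℤ) * q - 1) s 2).card = s * q.choose 2 := by
  obtain ⟨s', rfl⟩ : ∃ s', s = s' + 1 := ⟨s - 1, by omega⟩
  have h1 : ((Finset.range (s' + 1)) ×ˢ
        ((Finset.range q).sigma fun a => Finset.Ico (q - a) q)).card
      = (s' + 1) * q.choose 2 := by
    rw [Finset.card_product, Finset.card_sigma, Finset.card_range]
    congr 1
    rw [Nat.choose_two_right, ← Finset.sum_range_id]
    refine Finset.sum_congr rfl fun a ha => ?_
    rw [Nat.card_Ico]
    have := Finset.mem_range.mp ha
    omega
  rw [← h1]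
  symm
  refine Finset.card_nbij'
    (i := fun p => ![p.2.1 + q * p.1, p.2.2 + q * (s' - p.1)])
    (j := fun v => (v 0 / q, ⟨v 0 % q, v 1 % q⟩)) ?_ ?_ ?_ ?_
  · rintro ⟨t, a, b⟩ hp
    simp only [Finset.mem_coe, Finset.mem_product, Finset.mem_range, Finset.mem_sigma, Finset.mem_Ico] at hp
    obtain ⟨ht, ha, hb1, hb2⟩ := hp
    have ht' : t ≤ s' := by omega
    have hqt : q * t ≤ q * s' := Nat.mul_le_mul_left q ht'
    have hqt2 : q * (s' - t) ≤ q * s' := Nat.mul_le_mul_left q (by omega)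
    have hab : q ≤ a + b := by omega
    have hsplit : q * (s' - t) + q * t = q * s' := by
      rw [← Nat.mul_add]; congr 1; omega
    simp only [Finset.mem_coe, Rset, Cset, Finset.mem_filter, Fintype.mem_piFinset, Finset.mem_range,
      Fin.sum_univ_two, Matrix.cons_val_zero, Matrix.cons_val_one, Matrix.head_cons]
    refine ⟨⟨fun ℓ => ?_, ?_⟩, ?_⟩
    · fin_cases ℓ <;> simp <;> nlinarith
    · rw [Nat.add_mul_div_left _ _ hq, Nat.add_mul_div_left _ _ hq,
        Nat.div_eq_of_lt ha, Nat.div_eq_of_lt hb2]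
      omega
    · push_cast [Nat.cast_sub ht']
      have habZ : (q : ℤ) ≤ a + b := by exact_mod_cast hab
      have hqtZ : (t : ℤ) ≤ s' := by exact_mod_cast ht'
      nlinarith
  · intro v hv
    simp only [Finset.mem_coe, Rset, Cset, Finset.mem_filter, Fintype.mem_piFinset, Finset.mem_range,
      Fin.sum_univ_two] at hv
    obtain ⟨⟨hb, hdiv⟩, hsum⟩ := hv
    have hb0 := hb 0; have hb1 := hb 1
    have hz : ((s' + 1 : ℕ) : ℤ) * q - 1 < (v 0 : ℤ) + v 1 := by exact_mod_cast hsum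
    have hsumN : (s' + 1) * q ≤ v 0 + v 1 := by
      have h2 : (((s' + 1) * q : ℕ) : ℤ) ≤ ((v 0 + v 1 : ℕ) : ℤ) := by
        push_cast; push_cast at hz; linarith
      exact_mod_cast h2
    simp only [Finset.mem_coe, Finset.mem_product, Finset.mem_range, Finset.mem_sigma, Finset.mem_Ico]
    have hd0 := Nat.div_add_mod (v 0) q
    have hd1 := Nat.div_add_mod (v 1) q
    have hm0 : v 0 % q < q := Nat.mod_lt _ hq
    have hm1 : v 1 % q < q := Nat.mod_lt _ hq
    have hdle : v 0 / q + v 1 / q ≤ s' := Nat.lt_succ_iff.mp hdiv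
    have hmul : q * (v 0 / q + v 1 / q) ≤ q * s' := Nat.mul_le_mul_left q hdle
    refine ⟨lt_of_le_of_lt (Nat.le_add_right _ _) hdiv, hm0, ?_, hm1⟩
    refine Nat.sub_le_iff_le_add.mpr ?_
    nlinarith
  · rintro ⟨t, a, b⟩ hp
    simp only [Finset.mem_coe, Finset.mem_product, Finset.mem_range, Finset.mem_sigma, Finset.mem_Ico] at hp
    obtain ⟨ht, ha, hb1, hb2⟩ := hp
    simp only [Matrix.cons_val_zero, Matrix.cons_val_one, Matrix.head_cons]
    rw [Nat.add_mul_div_left _ _ hq, Nat.div_eq_of_lt ha,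
      Nat.add_mul_mod_self_left, Nat.add_mul_mod_self_left,
      Nat.mod_eq_of_lt ha, Nat.mod_eq_of_lt hb2]
    simp
  · intro v hv
    simp only [Finset.mem_coe, Rset, Cset, Finset.mem_filter, Fintype.mem_piFinset, Finset.mem_range,
      Fin.sum_univ_two] at hv
    obtain ⟨⟨hb, hdiv⟩, hsum⟩ := hv
    have hb0 := hb 0; have hb1 := hb 1
    have hz : ((s' + 1 : ℕ) : ℤ) * q - 1 < (v 0 : ℤ) + v 1 := by exact_mod_cast hsum
    have hsumN : (s' + 1) * q ≤ v 0 + v 1 := by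
      have h2 : (((s' + 1) * q : ℕ) : ℤ) ≤ ((v 0 + v 1 : ℕ) : ℤ) := by
        push_cast; push_cast at hz; linarith
      exact_mod_cast h2
    have hd0 := Nat.div_add_mod (v 0) q
    have hd1 := Nat.div_add_mod (v 1) q
    have hm0 : v 0 % q < q := Nat.mod_lt _ hq
    have hm1 : v 1 % q < q := Nat.mod_lt _ hq
    have hdle : v 0 / q + v 1 / q ≤ s' := Nat.lt_succ_iff.mp hdiv
    have hts : v 0 / q + v 1 / q = s' := by
      rcases Nat.lt_or_ge (v 0 / q + v 1 / q) s' with h | h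
      · exfalso
        have hmul : q * (v 0 / q + v 1 / q + 1) ≤ q * s' :=
          Nat.mul_le_mul_left q (Nat.succ_le_of_lt h)
        nlinarith
      · exact Nat.le_antisymm hdle h
    funext ℓ
    fin_cases ℓ <;>
      simp only [Matrix.cons_val_zero, Matrix.cons_val_one, Matrix.head_cons]
    · exact Nat.mod_add_div _ _
    · have he : s' - v 0 / q = v 1 / q := by
        rw [← hts, Nat.add_sub_cancel_left]
      rw [he]
      exact Nat.mod_add_div _ _

theorem stmt14 (q : ℕ) (hq : IsPrimePow q) (s : ℕ) (hs : 0 < s) :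
    (Rset q ((s : ℤ) * q - 1) s 2).card = s * q.choose 2
    ∧ ∀ d : ℤ, d < (s * q : ℕ) → s * q.choose 2 ≤ (Rset q d s 2).card := by

  have hq0 : 0 < q := hq.pos
  constructor
  · exact key q s hq0 hs
  · intro d hd
    rw [← key q s hq0 hs]
    apply Finset.card_le_card
    intro v hv
    simp only [Rset, Finset.mem_filter] at hv ⊢
    refine ⟨hv.1, lt_of_le_of_lt ?_ hv.2⟩
    have : d ≤ (s : ℤ) * q - 1 := by push_cast at hd; linarith
    linarith
end
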